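/- Let n, m be positive integers, Ψ : ℝ → Mat_{n×m}(ℝ) and d̃ : ℝ → ℝⁿ be continuous with ‖d̃(t)‖ ≤ ρ₂ for all t, where ρ₂ > 0. Let P and L be n×n positive definite diagonal matrices, set c₁ = λ_min(PL), c₂ = λ_max(P), fix α with 0 < α < c₁, and set μ = c₂ρ₂/α and k = (c₁ − α)μ². Suppose ṽ : ℝ → ℝⁿ and θ̃ : ℝ → ℝᵐ are differentiable and satisfy ṽ′(t) = Ψ(t) θ̃(t) − L ṽ(t) − d̃(t) and θ̃′(t) = −Ψ(t)ᵀ P ṽ(t) for all t, and let V₁(t) = ½ ṽ(t)ᵀ P ṽ(t) + ½ ‖θ̃(t)‖². If t₀ ≤ t₁ and ‖ṽ(t)‖ ≥ μ for all t ∈ [t₀, t₁], then V₁(t₁) ≤ V₁(t₀) − k (t₁ − t₀). Consequently, t₁ − t₀ ≤ V₁(t₀)/k, i.e., the observation error ṽ must enter the ball of radius μ within time V₁(t₀)/k after t₀. -/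

import Mathlib

/-!
Along the dynamics the coupling terms `⟪P ṽ, Ψ θ̃⟫` and `⟪θ̃, Ψᵀ P ṽ⟫` of `V₁'` cancel, leaving
`V₁' = -⟪P ṽ, L ṽ⟫ - ⟪P ṽ, d̃⟫ ≤ -c₁ ‖ṽ‖² + c₂ ρ₂ ‖ṽ‖ = -c₁ ‖ṽ‖² + α μ ‖ṽ‖`, which is at most
`-k` as long as `‖ṽ‖ ≥ μ`. The mean value theorem turns this into the linear decay of `V₁`, and
since `V₁ ≥ 0` the decay can last at most `V₁(t₀)/k`.
-/

open Matrix

/-- Multiplication of a matrix with a vector of the corresponding Euclidean space. -/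
def mulVecE {n m : ℕ} (M : Matrix (Fin n) (Fin m) ℝ) (x : EuclideanSpace ℝ (Fin m)) :
    EuclideanSpace ℝ (Fin n) :=
  WithLp.toLp 2 (M.mulVec x)

open RealInnerProductSpace Set

lemma image_sub_le_mul_sub_of_hasDerivAt_le {f f' : ℝ → ℝ} {a b C : ℝ}
    (hf : ∀ t, HasDerivAt f (f' t) t) (hf' : ∀ t ∈ Icc a b, f' t ≤ C) (hab : a ≤ b) :
    f b - f a ≤ C * (b - a) :=
  (convex_Icc a b).image_sub_le_mul_sub_of_deriv_le
    (fun t _ => (hf t).continuousAt.continuousWithinAt)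
    (fun t _ => (hf t).differentiableAt.differentiableWithinAt)
    (fun t ht => (hf t).deriv ▸ hf' t (interior_subset ht))
    a (left_mem_Icc.2 hab) b (right_mem_Icc.2 hab) hab

section
variable {n m : ℕ}

lemma inner_mulVecE_left (M : Matrix (Fin n) (Fin m) ℝ) (x : EuclideanSpace ℝ (Fin m))
    (y : EuclideanSpace ℝ (Fin n)) : ⟪mulVecE M x, y⟫ = ⟪x, mulVecE Mᵀ y⟫ := by
  simp only [mulVecE, star_trivial, EuclideanSpace.inner_eq_star_dotProduct]
  rw [dotProduct_mulVec, mulVec_transpose, dotProduct_comm]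

lemma dotProduct_mulVec_eq_inner (M : Matrix (Fin n) (Fin n) ℝ) (x : EuclideanSpace ℝ (Fin n)) :
    x ⬝ᵥ M *ᵥ x = ⟪mulVecE M x, x⟫ := by
  simp [mulVecE, EuclideanSpace.inner_eq_star_dotProduct]

lemma mulVecE_diagonal_apply (a : Fin n → ℝ) (x : EuclideanSpace ℝ (Fin n)) (i : Fin n) :
    mulVecE (diagonal a) x i = a i * x i := by
  simp [mulVecE, mulVec_diagonal]

lemma inner_mulVecE_diagonal (a : Fin n → ℝ) (x y : EuclideanSpace ℝ (Fin n)) :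
    ⟪mulVecE (diagonal a) x, y⟫ = ∑ i, a i * x i * y i := by
  simp only [EuclideanSpace.inner_eq_star_dotProduct, star_trivial, dotProduct, mulVecE,
    mulVec_diagonal]
  exact Finset.sum_congr rfl fun i _ => by ring

lemma inner_mulVecE_diagonal_mulVecE_diagonal (a b : Fin n → ℝ) (x y : EuclideanSpace ℝ (Fin n)) :
    ⟪mulVecE (diagonal a) x, mulVecE (diagonal b) y⟫ = ⟪mulVecE (diagonal (a * b)) x, y⟫ := by
  simp only [inner_mulVecE_diagonal, mulVecE_diagonal_apply, Pi.mul_apply]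
  exact Finset.sum_congr rfl fun i _ => by ring

lemma mul_norm_sq_le_inner_mulVecE_diagonal {a : Fin n → ℝ} {c : ℝ} (h : ∀ i, c ≤ a i)
    (x : EuclideanSpace ℝ (Fin n)) : c * ‖x‖ ^ 2 ≤ ⟪mulVecE (diagonal a) x, x⟫ := by
  rw [inner_mulVecE_diagonal, EuclideanSpace.real_norm_sq_eq, Finset.mul_sum]
  exact Finset.sum_le_sum fun i _ => by nlinarith [h i, sq_nonneg (x i)]

lemma norm_mulVecE_diagonal_le {a : Fin n → ℝ} {c : ℝ} (hc : 0 ≤ c) (h : ∀ i, |a i| ≤ c)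
    (x : EuclideanSpace ℝ (Fin n)) : ‖mulVecE (diagonal a) x‖ ≤ c * ‖x‖ := by
  refine le_of_pow_le_pow_left₀ two_ne_zero (by positivity) ?_
  have hsq : ∀ i, a i ^ 2 ≤ c ^ 2 := fun i => sq_le_sq' (abs_le.1 (h i)).1 (abs_le.1 (h i)).2
  calc ‖mulVecE (diagonal a) x‖ ^ 2 = ∑ i, a i ^ 2 * x i ^ 2 := by
        simp only [EuclideanSpace.real_norm_sq_eq, mulVecE_diagonal_apply, mul_pow]
    _ ≤ c ^ 2 * ‖x‖ ^ 2 := by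
      rw [EuclideanSpace.real_norm_sq_eq, Finset.mul_sum]
      exact Finset.sum_le_sum fun i _ => mul_le_mul_of_nonneg_right (hsq i) (sq_nonneg _)
    _ = (c * ‖x‖) ^ 2 := by ring

lemma HasDerivAt.inner_mulVecE_self {M : Matrix (Fin n) (Fin n) ℝ} (hM : Mᵀ = M)
    {v : ℝ → EuclideanSpace ℝ (Fin n)} {v' : EuclideanSpace ℝ (Fin n)} {t : ℝ}
    (hv : HasDerivAt v v' t) :
    HasDerivAt (fun s => ⟪mulVecE M (v s), v s⟫) (2 * ⟪mulVecE M (v t), v'⟫) t := by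
  have hMv : HasDerivAt (fun s => mulVecE M (v s)) (mulVecE M v') t :=
    (toEuclideanLin M).toContinuousLinearMap.hasFDerivAt.comp_hasDerivAt t hv
  refine (hMv.inner ℝ hv).congr_deriv ?_
  rw [inner_mulVecE_left M v', hM, real_inner_comm v']
  ring

lemma hasDerivAt_lyapunov {P L : Matrix (Fin n) (Fin n) ℝ} (hP : Pᵀ = P)
    {Ψ : Matrix (Fin n) (Fin m) ℝ} {d : EuclideanSpace ℝ (Fin n)}
    {v : ℝ → EuclideanSpace ℝ (Fin n)} {θ : ℝ → EuclideanSpace ℝ (Fin m)} {t : ℝ}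
    (hv : HasDerivAt v (mulVecE Ψ (θ t) - mulVecE L (v t) - d) t)
    (hθ : HasDerivAt θ (-(mulVecE Ψᵀ (mulVecE P (v t)))) t) :
    HasDerivAt (fun s => 1 / 2 * ⟪mulVecE P (v s), v s⟫ + 1 / 2 * ‖θ s‖ ^ 2)
      (-⟪mulVecE P (v t), mulVecE L (v t)⟫ - ⟪mulVecE P (v t), d⟫) t := by
  refine (((hv.inner_mulVecE_self hP).const_mul (1 / 2)).add
    (hθ.norm_sq.const_mul (1 / 2))).congr_deriv ?_
  rw [inner_sub_right, inner_sub_right, inner_neg_right,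
    real_inner_comm (mulVecE Ψ (θ t)), inner_mulVecE_left]
  ring

lemma lyapunov_deriv_le {p l : Fin n → ℝ} {c₁ c₂ ρ α μ : ℝ}
    (hc₁ : ∀ i, c₁ ≤ p i * l i) (hp : ∀ i, 0 ≤ p i) (hc₂ : ∀ i, p i ≤ c₂) (hc₂0 : 0 ≤ c₂)
    (hα : 0 ≤ α) (hαc : α ≤ c₁) (hμ : 0 ≤ μ) (hαμ : α * μ = c₂ * ρ)
    {x d : EuclideanSpace ℝ (Fin n)} (hd : ‖d‖ ≤ ρ) (hx : μ ≤ ‖x‖) :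
    -⟪mulVecE (diagonal p) x, mulVecE (diagonal l) x⟫ - ⟪mulVecE (diagonal p) x, d⟫
      ≤ -((c₁ - α) * μ ^ 2) := by
  have hdiss : c₁ * ‖x‖ ^ 2 ≤ ⟪mulVecE (diagonal p) x, mulVecE (diagonal l) x⟫ := by
    rw [inner_mulVecE_diagonal_mulVecE_diagonal]
    exact mul_norm_sq_le_inner_mulVecE_diagonal hc₁ x
  have hdist : -(c₂ * ρ * ‖x‖) ≤ ⟪mulVecE (diagonal p) x, d⟫ := by
    refine neg_le_of_abs_le ((abs_real_inner_le_norm _ _).trans ?_)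
    have hPx := norm_mulVecE_diagonal_le hc₂0 (fun i => (abs_of_nonneg (hp i)).trans_le (hc₂ i)) x
    calc ‖mulVecE (diagonal p) x‖ * ‖d‖ ≤ (c₂ * ‖x‖) * ρ :=
          mul_le_mul hPx hd (norm_nonneg _) (by positivity)
      _ = c₂ * ρ * ‖x‖ := by ring
  -- `-c₁ N² + α μ N ≤ -(c₁ - α) N² ≤ -(c₁ - α) μ²` for `N = ‖x‖ ≥ μ`
  nlinarith [mul_le_mul_of_nonneg_left hx hα, mul_le_mul hx hx hμ (hμ.trans hx)]

end

theorem stmt3_general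
    (n m : ℕ) (hn : 0 < n)
    (Ψ : ℝ → Matrix (Fin n) (Fin m) ℝ)
    (ρ₂ : ℝ) (hρ₂ : 0 < ρ₂)
    (dtil : ℝ → EuclideanSpace ℝ (Fin n))
    (hdb : ∀ t, ‖dtil t‖ ≤ ρ₂)
    (p l : Fin n → ℝ) (hp : ∀ i, 0 < p i)
    (P L : Matrix (Fin n) (Fin n) ℝ)
    (hP : P = Matrix.diagonal p) (hL : L = Matrix.diagonal l)
    (c₁ c₂ : ℝ) (hc₁ : c₁ = ⨅ i, p i * l i) (hc₂ : c₂ = ⨆ i, p i)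
    (α μ k : ℝ) (hα : 0 < α) (hαc : α < c₁)
    (hμ : μ = c₂ * ρ₂ / α) (hk : k = (c₁ - α) * μ ^ 2)
    (vtil : ℝ → EuclideanSpace ℝ (Fin n)) (θtil : ℝ → EuclideanSpace ℝ (Fin m))
    (hv : ∀ t, HasDerivAt vtil (mulVecE (Ψ t) (θtil t) - mulVecE L (vtil t) - dtil t) t)
    (hθ : ∀ t, HasDerivAt θtil (-(mulVecE (Ψ t)ᵀ (mulVecE P (vtil t)))) t)
    (V₁ : ℝ → ℝ)
    (hV₁ : ∀ t, V₁ t = (1/2) * (vtil t ⬝ᵥ P *ᵥ vtil t) + (1/2) * ‖θtil t‖ ^ 2)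
    (t₀ t₁ : ℝ) (ht : t₀ ≤ t₁)
    (hbig : ∀ t ∈ Set.Icc t₀ t₁, μ ≤ ‖vtil t‖) :
    V₁ t₁ ≤ V₁ t₀ - k * (t₁ - t₀) ∧ t₁ - t₀ ≤ V₁ t₀ / k := by
  have hc₁le : ∀ i, c₁ ≤ p i * l i := fun i => hc₁ ▸ ciInf_le (finite_range _).bddBelow i
  have hc₂ge : ∀ i, p i ≤ c₂ := fun i => hc₂ ▸ le_ciSup (finite_range _).bddAbove i
  have hc₂pos : 0 < c₂ := (hp ⟨0, hn⟩).trans_le (hc₂ge _)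
  have hμpos : 0 < μ := hμ ▸ by positivity
  have hkpos : 0 < k := hk ▸ mul_pos (sub_pos.2 hαc) (pow_pos hμpos 2)
  have hV : V₁ = fun s => 1 / 2 * ⟪mulVecE P (vtil s), vtil s⟫ + 1 / 2 * ‖θtil s‖ ^ 2 := by
    funext s
    rw [hV₁, dotProduct_mulVec_eq_inner]
  have hPT : Pᵀ = P := hP ▸ diagonal_transpose p
  have hdecay : V₁ t₁ - V₁ t₀ ≤ -k * (t₁ - t₀) := by
    refine image_sub_le_mul_sub_of_hasDerivAt_le
      (fun t => hV ▸ hasDerivAt_lyapunov hPT (hv t) (hθ t)) (fun t htI => ?_) ht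
    rw [hP, hL, hk]
    exact lyapunov_deriv_le hc₁le (fun i => (hp i).le) hc₂ge hc₂pos.le hα.le hαc.le hμpos.le
      (by rw [hμ]; field_simp) (hdb t) (hbig t htI)
  have hV₁_nonneg : 0 ≤ V₁ t₁ := by
    have hquad : 0 ≤ ⟪mulVecE P (vtil t₁), vtil t₁⟫ := by
      simpa [hP] using mul_norm_sq_le_inner_mulVecE_diagonal (c := 0) (fun i => (hp i).le) _
    rw [hV]
    positivity
  refine ⟨by linarith, ?_⟩
  rw [le_div_iff₀ hkpos]
  linarith

/-- Along the parameter-estimation error dynamics with bounded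
disturbance and positive definite diagonal gains, if the observation error
satisfies `‖ṽ(t)‖ ≥ μ` on the whole interval `[t₀, t₁]`, then the Lyapunov
function `V₁` decreases at least linearly, `V₁(t₁) ≤ V₁(t₀) − k(t₁ − t₀)`, and
consequently `t₁ − t₀ ≤ V₁(t₀)/k`. Here `c₁ = λ_min(PL)`, `c₂ = λ_max(P)`,
`0 < α < c₁`, `μ = c₂ρ₂/α` and `k = (c₁ − α)μ²`. -/
theorem stmt3
    (n m : ℕ) (hn : 0 < n) (hm : 0 < m)
    (Ψ : ℝ → Matrix (Fin n) (Fin m) ℝ) (hΨ : Continuous Ψ)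
    (ρ₂ : ℝ) (hρ₂ : 0 < ρ₂)
    (dtil : ℝ → EuclideanSpace ℝ (Fin n)) (hdc : Continuous dtil)
    (hdb : ∀ t, ‖dtil t‖ ≤ ρ₂)
    (p l : Fin n → ℝ) (hp : ∀ i, 0 < p i) (hl : ∀ i, 0 < l i)
    (P L : Matrix (Fin n) (Fin n) ℝ)
    (hP : P = Matrix.diagonal p) (hL : L = Matrix.diagonal l)
    (c₁ c₂ : ℝ) (hc₁ : c₁ = ⨅ i, p i * l i) (hc₂ : c₂ = ⨆ i, p i)
    (α μ k : ℝ) (hα : 0 < α) (hαc : α < c₁)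
    (hμ : μ = c₂ * ρ₂ / α) (hk : k = (c₁ - α) * μ ^ 2)
    (vtil : ℝ → EuclideanSpace ℝ (Fin n)) (θtil : ℝ → EuclideanSpace ℝ (Fin m))
    (hv : ∀ t, HasDerivAt vtil (mulVecE (Ψ t) (θtil t) - mulVecE L (vtil t) - dtil t) t)
    (hθ : ∀ t, HasDerivAt θtil (-(mulVecE (Ψ t)ᵀ (mulVecE P (vtil t)))) t)
    (V₁ : ℝ → ℝ)
    (hV₁ : ∀ t, V₁ t = (1/2) * (vtil t ⬝ᵥ P *ᵥ vtil t) + (1/2) * ‖θtil t‖ ^ 2)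
    (t₀ t₁ : ℝ) (ht : t₀ ≤ t₁)
    (hbig : ∀ t ∈ Set.Icc t₀ t₁, μ ≤ ‖vtil t‖) :
    V₁ t₁ ≤ V₁ t₀ - k * (t₁ - t₀) ∧ t₁ - t₀ ≤ V₁ t₀ / k :=
  stmt3_general n m hn Ψ ρ₂ hρ₂ dtil hdb p l hp P L hP hL c₁ c₂ hc₁ hc₂ α μ k hα hαc hμ hk vtil θtil
    hv hθ V₁ hV₁ t₀ t₁ ht hbig
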